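/- Let G be a finite weighted planar graph with vertices a, b, c, d in cyclic order on a face F, and S a subset of the vertices of F disjoint from {a,b,c,d} that is both a,c-separated and b,d-separated. Then M_f(G)·M_f(G∖{a,b,c,d}) + M_f(G∖{b,d})·M_f(G∖{a,c}) = M_f(G∖{a,d})·M_f(G∖{b,c}) + M_f(G∖{a,b})·M_f(G∖{c,d}). -/

import Mathlib

/-!
Kuo's bijection. For a pair `(M₁, M₂)` of free matchings from one side of the identity, every
vertex has degree at most two in `M₁ ∆ M₂`, and its vertices of odd degree are `a, b, c, d`
together with some free vertices of `S`. Disjoint paths `a – c` and `b – d` would cross on the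
face, and the separation hypotheses exclude a path `a – c` (resp. `b – d`) disjoint from paths
joining the other two terminals to distinct free vertices; hence `a` is never joined to `c` in
`M₁ ∆ M₂`, nor `b` to `d`. Exchanging `M₁` and `M₂` along the components of `a` and of a partner
`p ∈ {b, d}` read off from `M₁ ∆ M₂` therefore moves exactly `a` and `p` between the sets of
unmatched terminals. The exchange preserves the weight and `M₁ ∆ M₂`, so it is an involution, and
it maps the pairs counted on the left bijectively onto those counted on the right.
-/

open scoped Classical

variable {V : Type*} [Fintype V] [DecidableEq V] {R : Type*} [CommRing R]

/-- `M` is a matching of the induced subgraph of `G` on the vertex set `A`: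
a set of edges of `G` contained in `A` that are pairwise vertex-disjoint. -/
def IsMatchingOn (G : SimpleGraph V) (A : Finset V) (M : Finset (Sym2 V)) : Prop :=
  (∀ e ∈ M, e ∈ G.edgeSet) ∧ (∀ e ∈ M, ∀ v ∈ e, v ∈ A) ∧
  (∀ e ∈ M, ∀ f ∈ M, e ≠ f → ∀ v : V, v ∈ e → v ∉ f)

/-- `Mf G w S A` is the total weight (weight of a matching = product of its edge weights)
of all matchings of the induced subgraph of `G` on `A` in which every vertex of `A` not
belonging to the distinguished ("free") set `S` is matched. -/
noncomputable def Mf (G : SimpleGraph V) (w : Sym2 V → R) (S A : Finset V) : R :=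
  ∑ M ∈ Finset.univ.filter
      (fun M : Finset (Sym2 V) =>
        IsMatchingOn G A M ∧ ∀ v ∈ A, v ∉ S → ∃ e ∈ M, v ∈ e),
    ∏ e ∈ M, w e

/-- Two walks are (vertex-)disjoint. -/
def WalkDisjoint {G : SimpleGraph V} {u v u' v' : V} (P : G.Walk u v) (Q : G.Walk u' v') : Prop :=
  ∀ z : V, z ∈ P.support → z ∉ Q.support

/-- `S` is `a,c`-separated (relative to `b` and `d`): there is no triple of mutually
vertex-disjoint paths `P₁ : a — c`, `P₂ : b — s`, `P₃ : d — t` with `s ≠ t` in `S`. -/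
def Separated (G : SimpleGraph V) (S : Finset V) (a b c d : V) : Prop :=
  ¬ ∃ (s t : V) (P₁ : G.Walk a c) (P₂ : G.Walk b s) (P₃ : G.Walk d t),
      s ∈ S ∧ t ∈ S ∧ s ≠ t ∧ P₁.IsPath ∧ P₂.IsPath ∧ P₃.IsPath ∧
      WalkDisjoint P₁ P₂ ∧ WalkDisjoint P₁ P₃ ∧ WalkDisjoint P₂ P₃

/-- `L` is the boundary cycle of a face of a planar embedding of `G`, on which the four
vertices `a`, `b`, `c`, `d` occur in this cyclic order.  Planarity of the embedding is
encoded through its characteristic combinatorial consequence: two pairs of vertices that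
interleave on the boundary cycle of a face can never be joined by two vertex-disjoint
paths of `G`. -/
structure FaceConfig (G : SimpleGraph V) (L : List V) (a b c d : V) : Prop where
  nodup : L.Nodup
  cyclic : ∃ L' : List V, L ~r L' ∧ ∃ i j k l : Fin L'.length,
      i < j ∧ j < k ∧ k < l ∧ L'.get i = a ∧ L'.get j = b ∧ L'.get k = c ∧ L'.get l = d
  noncrossing : ∀ L' : List V, L ~r L' → ∀ i j k l : Fin L'.length, i < j → j < k → k < l →
      ¬ ∃ (P : G.Walk (L'.get i) (L'.get k)) (Q : G.Walk (L'.get j) (L'.get l)),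
          P.IsPath ∧ Q.IsPath ∧ WalkDisjoint P Q


open Finset SimpleGraph
open scoped symmDiff

lemma Finset.card_symmDiff_add_two_mul_card_inter {α : Type*} [DecidableEq α] (s t : Finset α) :
    #(s ∆ t) + 2 * #(s ∩ t) = #s + #t := by
  rw [symmDiff_eq_sup_sdiff_inf, sup_eq_union, inf_eq_inter,
    card_sdiff_of_subset inter_subset_union, two_mul, ← add_assoc,
    Nat.sub_add_cancel (card_le_card inter_subset_union), card_union_add_card_inter]

section Matchings

variable {α : Type*} [DecidableEq α] {G : SimpleGraph α} {A A₁ A₂ : Finset α}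
  {M : Finset (Sym2 α)} {x : Finset (Sym2 α) × Finset (Sym2 α)} {W : Set α} {e : Sym2 α} {v : α}

def Saturates (M : Finset (Sym2 α)) (v : α) : Prop := ∃ e ∈ M, v ∈ e

lemma IsMatchingOn.card_filter_mem (h : IsMatchingOn G A M) (v : α) :
    #(M.filter (v ∈ ·)) = if Saturates M v then 1 else 0 := by
  split_ifs with hv
  · obtain ⟨e, he, hve⟩ := hv
    refine card_eq_one.2 ⟨e, eq_singleton_iff_unique_mem.2 ⟨mem_filter.2 ⟨he, hve⟩, ?_⟩⟩
    rintro f hf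
    rw [mem_filter] at hf
    by_contra hfe
    exact h.2.2 f hf.1 e he hfe v hf.2 hve
  · exact card_eq_zero.2 (filter_eq_empty_iff.2 fun e he hve => hv ⟨e, he, hve⟩)

def symmDiffGraph (x : Finset (Sym2 α) × Finset (Sym2 α)) : SimpleGraph α :=
  fromEdgeSet ↑(x.1 ∆ x.2)

lemma symmDiffGraph_le (h₁ : IsMatchingOn G A₁ x.1) (h₂ : IsMatchingOn G A₂ x.2) :
    symmDiffGraph x ≤ G := by
  intro u v huv
  rw [symmDiffGraph, fromEdgeSet_adj, mem_coe, mem_symmDiff] at huv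
  rcases huv.1 with ⟨he, -⟩ | ⟨he, -⟩
  exacts [h₁.1 _ he, h₂.1 _ he]

lemma mem_of_adj_closed_of_mem_symmDiff
    (hW : ∀ ⦃u v⦄, (symmDiffGraph x).Adj u v → u ∈ W → v ∈ W) (he : e ∈ x.1 ∆ x.2)
    {u : α} (hu : u ∈ e) (hv : v ∈ e) (huW : u ∈ W) : v ∈ W := by
  by_cases huv : u = v
  · exact huv ▸ huW
  · obtain rfl := (Sym2.mem_and_mem_iff huv).1 ⟨hu, hv⟩
    exact hW (fromEdgeSet_adj _ |>.2 ⟨he, huv⟩) huW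

noncomputable def edgesMeeting (D : Finset (Sym2 α)) (W : Set α) : Finset (Sym2 α) :=
  D.filter fun e => ∃ v ∈ e, v ∈ W

noncomputable def swapAlong (W : Set α) (x : Finset (Sym2 α) × Finset (Sym2 α)) :
    Finset (Sym2 α) × Finset (Sym2 α) :=
  (x.1 ∆ edgesMeeting (x.1 ∆ x.2) W, x.2 ∆ edgesMeeting (x.1 ∆ x.2) W)

lemma swapAlong_symmDiff : (swapAlong W x).1 ∆ (swapAlong W x).2 = x.1 ∆ x.2 := by
  simp [swapAlong, symmDiff_symmDiff_symmDiff_comm]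

lemma symmDiffGraph_swapAlong : symmDiffGraph (swapAlong W x) = symmDiffGraph x := by
  rw [symmDiffGraph, swapAlong_symmDiff, symmDiffGraph]

lemma swapAlong_swapAlong : swapAlong W (swapAlong W x) = x := by
  rw [swapAlong, swapAlong_symmDiff]
  simp [swapAlong, symmDiff_symmDiff_cancel_right]

lemma swapAlong_swap : swapAlong W x.swap = (swapAlong W x).swap := by
  simp [swapAlong, symmDiff_comm x.2]

lemma prod_swapAlong {β : Type*} [CommMonoid β] (w : Sym2 α → β) :
    (∏ e ∈ (swapAlong W x).1, w e) * ∏ e ∈ (swapAlong W x).2, w e =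
      (∏ e ∈ x.1, w e) * ∏ e ∈ x.2, w e := by
  have hC : edgesMeeting (x.1 ∆ x.2) W ⊆ x.1 ∆ x.2 := filter_subset _ _
  have hunion : (swapAlong W x).1 ∪ (swapAlong W x).2 = x.1 ∪ x.2 := by
    ext e; have := @hC e; simp only [swapAlong, mem_union, mem_symmDiff] at this ⊢; tauto
  have hinter : (swapAlong W x).1 ∩ (swapAlong W x).2 = x.1 ∩ x.2 := by
    ext e; have := @hC e; simp only [swapAlong, mem_inter, mem_symmDiff] at this ⊢; tauto
  rw [← prod_union_inter, hunion, hinter, prod_union_inter]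

lemma mem_swapAlong_fst_iff (hW : ∀ ⦃u v⦄, (symmDiffGraph x).Adj u v → u ∈ W → v ∈ W)
    (hve : v ∈ e) : e ∈ (swapAlong W x).1 ↔ e ∈ if v ∈ W then x.2 else x.1 := by
  have hC : e ∈ edgesMeeting (x.1 ∆ x.2) W ↔ e ∈ x.1 ∆ x.2 ∧ v ∈ W := by
    simp only [edgesMeeting, mem_filter]
    exact ⟨fun ⟨he, u, hue, huW⟩ => ⟨he, mem_of_adj_closed_of_mem_symmDiff hW he hue hve huW⟩,
      fun ⟨he, hvW⟩ => ⟨he, v, hve, hvW⟩⟩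
  rw [swapAlong, mem_symmDiff, hC, mem_symmDiff]
  split_ifs <;> tauto

end Matchings

section FreeMatchings

variable {G : SimpleGraph V} {S A E E₁ E₂ Q : Finset V} {M : Finset (Sym2 V)}
  {x : Finset (Sym2 V) × Finset (Sym2 V)} {W : Set V} {v : V}

def IsFreeMatching (G : SimpleGraph V) (S A : Finset V) (M : Finset (Sym2 V)) : Prop :=
  IsMatchingOn G A M ∧ ∀ v ∈ A, v ∉ S → Saturates M v

-- The filter is spelled out as in `Mf`, so that `Mf` is the sum over `freeMatchings` by `rfl`.
noncomputable def freeMatchings (G : SimpleGraph V) (S A : Finset V) : Finset (Finset (Sym2 V)) :=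
  univ.filter fun M => IsMatchingOn G A M ∧ ∀ v ∈ A, v ∉ S → ∃ e ∈ M, v ∈ e

lemma mem_freeMatchings : M ∈ freeMatchings G S A ↔ IsFreeMatching G S A M := by
  simp [freeMatchings, IsFreeMatching, Saturates]

-- When `E ⊆ Q` and `Q` avoids `S`, the two matchings of such a pair leave unmatched exactly the
-- complementary parts `E` and `Q \ E` of `Q`.
noncomputable def pairsOfType (G : SimpleGraph V) (S Q E : Finset V) :
    Finset (Finset (Sym2 V) × Finset (Sym2 V)) :=
  freeMatchings G S (univ \ E) ×ˢ freeMatchings G S (univ \ (Q ∆ E))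

lemma mem_pairsOfType : x ∈ pairsOfType G S Q E ↔
    IsFreeMatching G S (univ \ E) x.1 ∧ IsFreeMatching G S (univ \ (Q ∆ E)) x.2 := by
  rw [pairsOfType, mem_product, mem_freeMatchings, mem_freeMatchings]

def pairWeight (w : Sym2 V → R) (x : Finset (Sym2 V) × Finset (Sym2 V)) : R :=
  (∏ e ∈ x.1, w e) * ∏ e ∈ x.2, w e

lemma sum_pairWeight_pairsOfType (w : Sym2 V → R) :
    ∑ x ∈ pairsOfType G S Q E, pairWeight w x =
      Mf G w S (univ \ E) * Mf G w S (univ \ (Q ∆ E)) := by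
  rw [Mf, Mf, sum_mul_sum, pairsOfType, sum_product]
  rfl

lemma IsFreeMatching.saturates_iff (h : IsFreeMatching G S (univ \ E) M) (hv : v ∉ S) :
    Saturates M v ↔ v ∉ E :=
  ⟨fun ⟨e, he, hve⟩ => by simpa using h.1.2.1 e he v hve, fun hvE => h.2 v (by simpa) hv⟩

lemma disjoint_pairsOfType {E' : Finset V} (hv : v ∉ S) (hvE : v ∈ E ∆ E') :
    Disjoint (pairsOfType G S Q E) (pairsOfType G S Q E') := by
  refine disjoint_product.2 (Or.inl (disjoint_left.2 fun M hM hM' => ?_))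
  rw [mem_freeMatchings] at hM hM'
  have := (hM.saturates_iff hv).symm.trans (hM'.saturates_iff hv)
  rw [mem_symmDiff] at hvE
  tauto

lemma IsFreeMatching.swapAlong_fst
    (hW : ∀ ⦃u v⦄, (symmDiffGraph x).Adj u v → u ∈ W → v ∈ W)
    (h₁ : IsFreeMatching G S (univ \ E₁) x.1) (h₂ : IsFreeMatching G S (univ \ E₂) x.2) :
    IsFreeMatching G S (univ \ (E₁ ∆ (E₁ ∆ E₂).filter (· ∈ W))) (swapAlong W x).1 := by
  set A : V → Finset V := fun v => if v ∈ W then univ \ E₂ else univ \ E₁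
  set N : V → Finset (Sym2 V) := fun v => if v ∈ W then x.2 else x.1
  have hN : ∀ v, IsFreeMatching G S (A v) (N v) := fun v => by
    simp only [A, N]; split_ifs; exacts [h₂, h₁]
  have hA : ∀ v, v ∈ univ \ (E₁ ∆ (E₁ ∆ E₂).filter (· ∈ W)) ↔ v ∈ A v := fun v => by
    simp only [A]
    split_ifs <;> simp only [mem_sdiff, mem_univ, true_and, mem_symmDiff, mem_filter] <;> tauto
  have hmem : ∀ {e v}, v ∈ e → (e ∈ (swapAlong W x).1 ↔ e ∈ N v) :=
    fun hve => mem_swapAlong_fst_iff hW hve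
  refine ⟨⟨fun e he => ?_, fun e he v hve => ?_, fun e he f hf hef v hve hvf => ?_⟩,
    fun v hv hvS => ?_⟩
  · exact (hN _).1.1 e ((hmem e.out_fst_mem).1 he)
  · exact (hA v).2 ((hN v).1.2.1 e ((hmem hve).1 he) v hve)
  · exact (hN v).1.2.2 e ((hmem hve).1 he) f ((hmem hvf).1 hf) hef v hve hvf
  · obtain ⟨e, he, hve⟩ := (hN v).2 v ((hA v).1 hv) hvS
    exact ⟨e, (hmem hve).2 he, hve⟩

lemma swapAlong_mem_pairsOfType
    (hW : ∀ ⦃u v⦄, (symmDiffGraph x).Adj u v → u ∈ W → v ∈ W) (hx : x ∈ pairsOfType G S Q E) :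
    swapAlong W x ∈ pairsOfType G S Q (E ∆ Q.filter (· ∈ W)) := by
  rw [mem_pairsOfType] at hx ⊢
  have hW' : ∀ ⦃u v⦄, (symmDiffGraph x.swap).Adj u v → u ∈ W → v ∈ W := by
    rwa [symmDiffGraph, Prod.fst_swap, Prod.snd_swap, symmDiff_comm, ← symmDiffGraph]
  have h₁ := IsFreeMatching.swapAlong_fst hW hx.1 hx.2
  have h₂ := IsFreeMatching.swapAlong_fst (x := x.swap) hW' hx.2 hx.1
  rw [symmDiff_comm Q, symmDiff_symmDiff_cancel_left] at h₁
  rw [symmDiff_symmDiff_cancel_right, swapAlong_swap, symmDiff_assoc] at h₂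
  exact ⟨h₁, h₂⟩

end FreeMatchings

section Degrees

variable {G : SimpleGraph V} {S E Q A₁ A₂ : Finset V} {x : Finset (Sym2 V) × Finset (Sym2 V)}
  {v : V}

lemma degree_symmDiffGraph_add (h₁ : IsMatchingOn G A₁ x.1) (h₂ : IsMatchingOn G A₂ x.2)
    (v : V) :
    (symmDiffGraph x).degree v + 2 * #((x.1 ∩ x.2).filter (v ∈ ·)) =
      (if Saturates x.1 v then 1 else 0) + (if Saturates x.2 v then 1 else 0) := by
  have hD : ∀ e ∈ x.1 ∆ x.2, ¬ e.IsDiag := fun e he => by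
    rcases mem_symmDiff.1 he with ⟨he, -⟩ | ⟨he, -⟩
    exacts [G.not_isDiag_of_mem_edgeSet (h₁.1 e he), G.not_isDiag_of_mem_edgeSet (h₂.1 e he)]
  have hdeg : (symmDiffGraph x).degree v = #((x.1 ∆ x.2).filter (v ∈ ·)) := by
    rw [← card_incidenceFinset_eq_degree, incidenceFinset_eq_filter]
    congr 1
    ext e
    simp only [mem_filter]
    rw [mem_edgeFinset]
    simp only [symmDiffGraph, edgeSet_fromEdgeSet, Set.mem_sdiff, mem_coe,
      Sym2.mem_diagSet, and_congr_left_iff, and_iff_left_iff_imp]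
    exact fun _ => hD e
  have hfilter : (x.1 ∆ x.2).filter (v ∈ ·) = x.1.filter (v ∈ ·) ∆ x.2.filter (v ∈ ·) := by
    ext e
    simp only [mem_filter, mem_symmDiff]
    tauto
  rw [hdeg, hfilter, filter_inter_distrib, card_symmDiff_add_two_mul_card_inter,
    h₁.card_filter_mem, h₂.card_filter_mem]

lemma degree_symmDiffGraph_le_two (h₁ : IsMatchingOn G A₁ x.1) (h₂ : IsMatchingOn G A₂ x.2)
    (v : V) : (symmDiffGraph x).degree v ≤ 2 := by
  have := degree_symmDiffGraph_add h₁ h₂ v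
  split_ifs at this <;> omega

lemma odd_degree_symmDiffGraph_iff (h₁ : IsMatchingOn G A₁ x.1) (h₂ : IsMatchingOn G A₂ x.2)
    (v : V) : Odd ((symmDiffGraph x).degree v) ↔ ¬ (Saturates x.1 v ↔ Saturates x.2 v) := by
  have := degree_symmDiffGraph_add h₁ h₂ v
  rw [Nat.odd_iff]
  split_ifs at this with hv₁ hv₂ hv₂ <;> simp [hv₁, hv₂] <;> omega

lemma odd_degree_symmDiffGraph_iff_mem (hx : x ∈ pairsOfType G S Q E) (hv : v ∉ S) :
    Odd ((symmDiffGraph x).degree v) ↔ v ∈ Q := by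
  rw [mem_pairsOfType] at hx
  rw [odd_degree_symmDiffGraph_iff hx.1.1 hx.2.1, hx.1.saturates_iff hv, hx.2.saturates_iff hv,
    mem_symmDiff]
  tauto

end Degrees

section Walks

variable {α : Type*} {G H : SimpleGraph α} {u v w x y : α}

lemma SimpleGraph.Reachable.mem_of_adj_closed {K : Set α}
    (hK : ∀ ⦃u w⦄, u ∈ K → H.Adj u w → w ∈ K) (h : H.Reachable u v) (hu : u ∈ K) : v ∈ K := by
  obtain ⟨p⟩ := h
  induction p with
  | nil => exact hu
  | cons huw _ ih => exact ih (hK hu huw)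

lemma SimpleGraph.Reachable.exists_isPath_of_le [DecidableEq α] (hHG : H ≤ G)
    (h : H.Reachable u v) : ∃ P : G.Walk u v, P.IsPath ∧ ∀ z ∈ P.support, H.Reachable u z := by
  obtain ⟨p⟩ := h
  refine ⟨p.bypass.mapLe hHG, (Walk.isPath_mapLe hHG).2 p.bypass_isPath,
    fun z hz => ?_⟩
  rw [Walk.support_mapLe_eq_support] at hz
  exact ⟨p.bypass.takeUntil z hz⟩

lemma walkDisjoint_of_not_reachable {P : G.Walk u v} {Q : G.Walk x y}
    (hP : ∀ z ∈ P.support, H.Reachable u z) (hQ : ∀ z ∈ Q.support, H.Reachable x z)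
    (h : ¬ H.Reachable u x) : WalkDisjoint P Q :=
  fun z hzP hzQ => h ((hP z hzP).trans (hQ z hzQ).symm)

lemma SimpleGraph.Walk.IsPath.exists_adj_adj {P : H.Walk x y} (hP : P.IsPath)
    (hu : u ∈ P.support) (hux : u ≠ x) (huy : u ≠ y) :
    ∃ v₁ v₂, v₁ ≠ v₂ ∧ H.Adj u v₁ ∧ H.Adj u v₂ ∧ v₁ ∈ P.support ∧ v₂ ∈ P.support := by
  obtain ⟨i, rfl, hi⟩ := Walk.mem_support_iff_exists_getVert.1 hu
  have h0 : i ≠ 0 := by rintro rfl; exact hux P.getVert_zero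
  have hlen : i ≠ P.length := by rintro rfl; exact huy P.getVert_length
  refine ⟨P.getVert (i - 1), P.getVert (i + 1), fun h => ?_, ?_, P.adj_getVert_succ (by omega),
    P.getVert_mem_support _, P.getVert_mem_support _⟩
  · have := hP.getVert_injOn (show i - 1 ≤ P.length by omega) (show i + 1 ≤ P.length by omega) h
    omega
  · have := P.adj_getVert_succ (i := i - 1) (by omega)
    rw [Nat.sub_add_cancel (by omega)] at this
    exact this.symm

lemma SimpleGraph.mem_of_subset_neighborFinset [Fintype (H.neighborSet u)] {s : Finset α}
    (hs : s ⊆ H.neighborFinset u) (hdeg : H.degree u ≤ #s) (hw : H.Adj u w) : w ∈ s := by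
  rw [eq_of_subset_of_card_le hs (by rwa [H.card_neighborFinset_eq_degree])]
  exact (H.mem_neighborFinset u w).2 hw

end Walks

section MaxDegreeTwo

variable {H : SimpleGraph V} {u v w x y z : V}

lemma SimpleGraph.two_le_degree_of_adj_adj (hne : v ≠ w) (hv : H.Adj u v) (hw : H.Adj u w) :
    2 ≤ H.degree u := by
  rw [← H.card_neighborFinset_eq_degree, ← card_pair hne]
  exact card_le_card (by simp [insert_subset_iff, hv, hw])

lemma SimpleGraph.Walk.IsPath.mem_support_of_adj (hdeg : ∀ v, H.degree v ≤ 2)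
    {P : H.Walk x y} (hP : P.IsPath) (hxy : x ≠ y) (hx : H.degree x ≤ 1) (hy : H.degree y ≤ 1)
    (hu : u ∈ P.support) (huw : H.Adj u w) : w ∈ P.support := by
  have endpoint : ∀ {a b} (Q : H.Walk a b), a ≠ b → H.degree a ≤ 1 →
      (∀ z ∈ Q.support, z ∈ P.support) → H.Adj a w → w ∈ P.support := by
    intro a b Q hab ha hQ haw
    obtain ⟨w', h, q, rfl⟩ := Walk.exists_eq_cons_of_ne hab Q
    have := H.mem_of_subset_neighborFinset (s := {w'}) (by simpa using h) (by simpa) haw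
    rw [mem_singleton.1 this]
    exact hQ _ (by simp)
  by_cases hux : u = x
  · subst hux
    exact endpoint P hxy hx (fun _ => id) huw
  by_cases huy : u = y
  · subst huy
    exact endpoint P.reverse hxy.symm hy (by simp) huw
  obtain ⟨v₁, v₂, hne, h₁, h₂, hv₁, hv₂⟩ := hP.exists_adj_adj hu hux huy
  have := H.mem_of_subset_neighborFinset (s := {v₁, v₂}) (by simp [insert_subset_iff, h₁, h₂])
    (by rw [card_pair hne]; exact hdeg u) huw
  rcases mem_insert.1 this with rfl | h
  exacts [hv₁, mem_singleton.1 h ▸ hv₂]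

lemma SimpleGraph.eq_or_eq_of_reachable_of_odd_degree (hdeg : ∀ v, H.degree v ≤ 2)
    (hx : Odd (H.degree x)) (hy : Odd (H.degree y)) (hz : Odd (H.degree z)) (hxy : x ≠ y)
    (rxy : H.Reachable x y) (rxz : H.Reachable x z) : z = x ∨ z = y := by
  have one : ∀ v, Odd (H.degree v) → H.degree v = 1 := fun v ⟨k, hk⟩ => by
    have := hdeg v; omega
  obtain ⟨p⟩ := rxy
  have hP := p.bypass_isPath
  have hzP : z ∈ p.bypass.support :=
    rxz.mem_of_adj_closed (K := {v | v ∈ p.bypass.support})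
      (fun _ _ hu huw => hP.mem_support_of_adj hdeg hxy (one x hx).le (one y hy).le hu huw)
      p.bypass.start_mem_support
  by_contra! h
  obtain ⟨v₁, v₂, hne, h₁, h₂, -, -⟩ := hP.exists_adj_adj hzP h.1 h.2
  have := H.two_le_degree_of_adj_adj hne h₁ h₂
  have := one z hz
  omega

lemma SimpleGraph.exists_ne_reachable_odd_degree (hv : Odd (H.degree v)) :
    ∃ w, w ≠ v ∧ H.Reachable v w ∧ Odd (H.degree w) := by
  set C := H.connectedComponentMk v
  have hC : ∀ {u}, H.Reachable v u → C.toSimpleGraph.spanningCoe.degree u = H.degree u := by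
    intro u hu
    simp only [← card_neighborFinset_eq_degree]
    congr 1
    ext t
    simp [C.adj_spanningCoe_toSimpleGraph, ConnectedComponent.mem_supp_iff, C,
      ConnectedComponent.eq, hu.symm]
  obtain ⟨w, hwv, hw⟩ := C.toSimpleGraph.spanningCoe.exists_ne_odd_degree_of_exists_odd_degree v
    (by rwa [hC (Reachable.refl v)])
  obtain ⟨t, ht⟩ := (degree_pos_iff_exists_adj _ w).1 hw.pos
  have hvw : H.Reachable v w := by
    have := ((C.adj_spanningCoe_toSimpleGraph).1 ht).1
    rwa [ConnectedComponent.mem_supp_iff, ConnectedComponent.eq,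
      reachable_comm] at this
  exact ⟨w, hwv, hvw, hC hvw ▸ hw⟩

end MaxDegreeTwo

lemma List.nodup_four_iff {α : Type*} {a b c d : α} :
    [a, b, c, d].Nodup ↔ a ≠ b ∧ a ≠ c ∧ a ≠ d ∧ b ≠ c ∧ b ≠ d ∧ c ≠ d := by
  simp [and_assoc]

lemma FaceConfig.nodup_and_noncrossing {α : Type*} {G : SimpleGraph α} {L : List α} {a b c d : α}
    (h : FaceConfig G L a b c d) :
    [a, b, c, d].Nodup ∧
      ¬ ∃ (P : G.Walk a c) (Q : G.Walk b d), P.IsPath ∧ Q.IsPath ∧ WalkDisjoint P Q := by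
  obtain ⟨L', hrot, i, j, k, l, hij, hjk, hkl, rfl, rfl, rfl, rfl⟩ := h.cyclic
  have hinj : ∀ {p q : Fin L'.length}, p < q → L'.get p ≠ L'.get q := fun hpq hpq' =>
    hpq.ne ((hrot.nodup_iff.1 h.nodup).get_inj_iff.1 hpq')
  exact ⟨List.nodup_four_iff.2 ⟨hinj hij, hinj (hij.trans hjk), hinj (hij.trans (hjk.trans hkl)),
    hinj hjk, hinj (hjk.trans hkl), hinj hkl⟩, h.noncrossing L' hrot i j k l hij hjk hkl⟩

section KuoSwap

variable {α : Type*} {H : SimpleGraph α} {a b c d : α}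

-- The choice keeps `c` and the other one of `b, d` out of `kuoSet` (see `filter_mem_kuoSet`).
noncomputable def kuoPartner (H : SimpleGraph α) (a b c d : α) : α :=
  if H.Reachable a d ∨ H.Reachable b c then d else b

def kuoSet (H : SimpleGraph α) (a b c d : α) : Set α :=
  {v | H.Reachable a v ∨ H.Reachable (kuoPartner H a b c d) v}

lemma kuoSet_adj_closed : ∀ ⦃u v⦄, H.Adj u v → u ∈ kuoSet H a b c d → v ∈ kuoSet H a b c d :=
  fun _ _ huv hu => hu.imp (·.trans huv.reachable) (·.trans huv.reachable)

lemma filter_mem_kuoSet [DecidableEq α] (hac : ¬ H.Reachable a c) (hbd : ¬ H.Reachable b d) :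
    ({a, b, c, d} : Finset α).filter (· ∈ kuoSet H a b c d) = {a, kuoPartner H a b c d} := by
  ext v
  simp only [mem_insert, mem_singleton, kuoSet, Set.mem_ofPred_eq, kuoPartner]
  simp only [← ConnectedComponent.eq] at *
  split_ifs <;> grind

noncomputable def kuoSwap [DecidableEq α] (a b c d : α) (x : Finset (Sym2 α) × Finset (Sym2 α)) :
    Finset (Sym2 α) × Finset (Sym2 α) :=
  swapAlong (kuoSet (symmDiffGraph x) a b c d) x

lemma kuoSwap_kuoSwap [DecidableEq α] (x : Finset (Sym2 α) × Finset (Sym2 α)) :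
    kuoSwap a b c d (kuoSwap a b c d x) = x := by
  rw [kuoSwap, kuoSwap, symmDiffGraph_swapAlong, swapAlong_swapAlong]

end KuoSwap

section Kuo

variable {G H : SimpleGraph V} {S Q E : Finset V} {a b c d u : V}
  {x : Finset (Sym2 V) × Finset (Sym2 V)}

lemma exists_mem_reachable_of_odd_degree
    (hodd : ∀ v, v ∉ S → (Odd (H.degree v) ↔ v ∈ Q)) (hu : Odd (H.degree u))
    (hiso : ∀ v ∈ Q, H.Reachable u v → v = u) : ∃ s ∈ S, H.Reachable u s := by
  obtain ⟨s, hsu, hus, hs⟩ := H.exists_ne_reachable_odd_degree hu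
  refine ⟨s, ?_, hus⟩
  by_contra hsS
  exact hsu (hiso s ((hodd s hsS).1 hs) hus)

/-- If `a` and `c` were joined in `H`, then either `b` would be joined to `d`, giving disjoint
paths that cross on the face, or `b` and `d` would be joined to two distinct free vertices,
contradicting separation. -/
lemma not_reachable_of_noncrossing (hne : [a, b, c, d].Nodup) (hS : Disjoint S {a, b, c, d})
    (hHG : H ≤ G) (hdeg : ∀ v, H.degree v ≤ 2)
    (hodd : ∀ v, v ∉ S → (Odd (H.degree v) ↔ v ∈ ({a, b, c, d} : Finset V)))
    (hcross : ¬ ∃ (P : G.Walk a c) (Q : G.Walk b d), P.IsPath ∧ Q.IsPath ∧ WalkDisjoint P Q)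
    (hsep : Separated G S a b c d) : ¬ H.Reachable a c := by
  intro hac
  obtain ⟨hab, hac', had, hbc, -, hcd⟩ := List.nodup_four_iff.1 hne
  have odd : ∀ v ∈ ({a, b, c, d} : Finset V), Odd (H.degree v) := fun v hv =>
    (hodd v (disjoint_right.1 hS hv)).2 hv
  have leaf : ∀ {v}, v ∈ ({a, b, c, d} : Finset V) → H.Reachable a v → v = a ∨ v = c :=
    fun hv hav => H.eq_or_eq_of_reachable_of_odd_degree hdeg (odd a (by simp)) (odd c (by simp))
      (odd _ hv) hac' hac hav
  have hab : ¬ H.Reachable a b := fun h => (leaf (by simp) h).elim (Ne.symm hab) hbc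
  have had : ¬ H.Reachable a d := fun h => (leaf (by simp) h).elim (Ne.symm had) (Ne.symm hcd)
  obtain ⟨P₁, hP₁, hP₁H⟩ := hac.exists_isPath_of_le hHG
  by_cases hbd : H.Reachable b d
  · obtain ⟨Q, hQ, hQH⟩ := hbd.exists_isPath_of_le hHG
    exact hcross ⟨P₁, Q, hP₁, hQ, walkDisjoint_of_not_reachable hP₁H hQH hab⟩
  obtain ⟨s, hs, hbs⟩ := exists_mem_reachable_of_odd_degree hodd (odd b (by simp)) (by
    simp only [mem_insert, mem_singleton]
    rintro v (rfl | rfl | rfl | rfl) h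
    exacts [absurd h.symm hab, rfl, absurd (hac.trans h.symm) hab, absurd h hbd])
  obtain ⟨t, ht, hdt⟩ := exists_mem_reachable_of_odd_degree hodd (odd d (by simp)) (by
    simp only [mem_insert, mem_singleton]
    rintro v (rfl | rfl | rfl | rfl) h
    exacts [absurd h.symm had, absurd h.symm hbd, absurd (hac.trans h.symm) had, rfl])
  obtain ⟨P₂, hP₂, hP₂H⟩ := hbs.exists_isPath_of_le hHG
  obtain ⟨P₃, hP₃, hP₃H⟩ := hdt.exists_isPath_of_le hHG
  exact hsep ⟨s, t, P₁, P₂, P₃, hs, ht, fun hst => hbd (hbs.trans (hst ▸ hdt.symm)), hP₁, hP₂,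
    hP₃, walkDisjoint_of_not_reachable hP₁H hP₂H hab,
    walkDisjoint_of_not_reachable hP₁H hP₃H had, walkDisjoint_of_not_reachable hP₂H hP₃H hbd⟩

lemma kuoSwap_mem_pairsOfType (hne : [a, b, c, d].Nodup) (hS : Disjoint S {a, b, c, d})
    (hcross : ¬ ∃ (P : G.Walk a c) (Q : G.Walk b d), P.IsPath ∧ Q.IsPath ∧ WalkDisjoint P Q)
    (hsepAC : Separated G S a b c d) (hsepBD : Separated G S b c d a)
    (hx : x ∈ pairsOfType G S {a, b, c, d} E) :
    kuoSwap a b c d x ∈ pairsOfType G S {a, b, c, d} (E ∆ {a, b}) ∨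
      kuoSwap a b c d x ∈ pairsOfType G S {a, b, c, d} (E ∆ {a, d}) := by
  obtain ⟨h₁, h₂⟩ := mem_pairsOfType.1 hx
  have hHG := symmDiffGraph_le h₁.1 h₂.1
  have hdeg := degree_symmDiffGraph_le_two h₁.1 h₂.1
  have hodd := fun v (hv : v ∉ S) => odd_degree_symmDiffGraph_iff_mem hx hv
  have hrot : ({b, c, d, a} : Finset V) = {a, b, c, d} := by
    ext; simp only [mem_insert, mem_singleton]; tauto
  have hac := not_reachable_of_noncrossing hne hS hHG hdeg hodd hcross hsepAC
  have hbd := not_reachable_of_noncrossing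
    ((List.nodup_rotate (n := 1)).2 hne : [b, c, d, a].Nodup) (hrot ▸ hS) hHG hdeg (hrot ▸ hodd)
    (fun ⟨P, Q, hP, hQ, hPQ⟩ => hcross ⟨Q.reverse, P, hQ.reverse, hP,
      fun z hzQ hzP => hPQ z hzP (by simpa using hzQ)⟩) hsepBD
  have := swapAlong_mem_pairsOfType (kuoSet_adj_closed (a := a) (b := b) (c := c) (d := d)) hx
  rw [filter_mem_kuoSet hac hbd, kuoPartner] at this
  split_ifs at this
  exacts [Or.inr this, Or.inl this]

-- The types on the left are `∅` and `{a, b} ∆ {a, d}`, those on the right `{a, d}` and `{a, b}`: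
-- adding `{a, b}` or `{a, d}` exchanges the two families.
lemma sum_pairWeight_kuo (w : Sym2 V → R) (hne : [a, b, c, d].Nodup)
    (hS : Disjoint S {a, b, c, d})
    (hcross : ¬ ∃ (P : G.Walk a c) (Q : G.Walk b d), P.IsPath ∧ Q.IsPath ∧ WalkDisjoint P Q)
    (hsepAC : Separated G S a b c d) (hsepBD : Separated G S b c d a) :
    ∑ x ∈ pairsOfType G S {a, b, c, d} ∅ ∪ pairsOfType G S {a, b, c, d} ({a, b} ∆ {a, d}),
        pairWeight w x =
      ∑ x ∈ pairsOfType G S {a, b, c, d} {a, d} ∪ pairsOfType G S {a, b, c, d} {a, b},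
        pairWeight w x := by
  have key := fun E x (hx : x ∈ pairsOfType G S {a, b, c, d} E) =>
    kuoSwap_mem_pairsOfType hne hS hcross hsepAC hsepBD hx
  refine sum_nbij' (kuoSwap a b c d) (kuoSwap a b c d) ?_ ?_ (fun x _ => kuoSwap_kuoSwap x)
    (fun x _ => kuoSwap_kuoSwap x) (fun x _ => (prod_swapAlong w).symm)
  · intro x hx
    rcases mem_union.1 hx with hx | hx <;> rcases key _ x hx with h | h
    · rw [← bot_eq_empty, bot_symmDiff] at h
      exact mem_union_right _ h
    · rw [← bot_eq_empty, bot_symmDiff] at h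
      exact mem_union_left _ h
    · rw [symmDiff_symmDiff_self'] at h
      exact mem_union_left _ h
    · rw [symmDiff_symmDiff_cancel_right] at h
      exact mem_union_right _ h
  · intro x hx
    rcases mem_union.1 hx with hx | hx <;> rcases key _ x hx with h | h
    · rw [symmDiff_comm] at h
      exact mem_union_right _ h
    · rw [symmDiff_self, bot_eq_empty] at h
      exact mem_union_left _ h
    · rw [symmDiff_self, bot_eq_empty] at h
      exact mem_union_left _ h
    · exact mem_union_right _ h

end Kuo

theorem free_boundary_kuo_four_term_general
    (G : SimpleGraph V) (w : Sym2 V → R) (L : List V) (S : Finset V) (a b c d : V)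
    (hface : FaceConfig G L a b c d)
    (hdisj : Disjoint S ({a, b, c, d} : Finset V))
    (hsepAC : Separated G S a b c d)
    (hsepBD : Separated G S b c d a) :
    Mf G w S Finset.univ * Mf G w S (Finset.univ \ {a, b, c, d}) +
      Mf G w S (Finset.univ \ {b, d}) * Mf G w S (Finset.univ \ {a, c}) =
    Mf G w S (Finset.univ \ {a, d}) * Mf G w S (Finset.univ \ {b, c}) +
      Mf G w S (Finset.univ \ {a, b}) * Mf G w S (Finset.univ \ {c, d}) := by
  obtain ⟨hne, hcross⟩ := hface.nodup_and_noncrossing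
  obtain ⟨hab, hac, had, hbc, hbd, hcd⟩ := List.nodup_four_iff.1 hne
  have hb : b ∉ S := disjoint_right.1 hdisj (by simp)
  have hid : ({a, b} : Finset V) ∆ {a, d} = {b, d} ∧
      ({a, b, c, d} : Finset V) ∆ {b, d} = {a, c} ∧ ({a, b, c, d} : Finset V) ∆ {a, d} = {b, c} ∧
      ({a, b, c, d} : Finset V) ∆ {a, b} = {c, d} := by
    refine ⟨?_, ?_, ?_, ?_⟩ <;> ext v <;> simp only [mem_symmDiff, mem_insert, mem_singleton] <;>
      grind
  have h := sum_pairWeight_kuo w hne hdisj hcross hsepAC hsepBD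
  rw [sum_union (disjoint_pairsOfType hb (by simp [hid.1, mem_symmDiff])),
    sum_union (disjoint_pairsOfType hb (by rw [symmDiff_comm, hid.1]; simp))] at h
  simpa only [sum_pairWeight_pairsOfType, hid, ← bot_eq_empty, symmDiff_bot, sdiff_bot] using h

/-- **Free-boundary Kuo condensation, first four-term version** (Corollary 2, eq. (3)).
If the free set `S` on the face is both `a,c`-separated and `b,d`-separated, then
Kuo's Pfaffian-type four-term recurrence holds for free-boundary matching counts. -/
theorem free_boundary_kuo_four_term
    (G : SimpleGraph V) (w : Sym2 V → R) (L : List V) (S : Finset V) (a b c d : V)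
    (hface : FaceConfig G L a b c d)
    (hSL : ∀ s ∈ S, s ∈ L)
    (hdisj : Disjoint S ({a, b, c, d} : Finset V))
    (hsepAC : Separated G S a b c d)
    (hsepBD : Separated G S b c d a) :
    Mf G w S Finset.univ * Mf G w S (Finset.univ \ {a, b, c, d}) +
      Mf G w S (Finset.univ \ {b, d}) * Mf G w S (Finset.univ \ {a, c}) =
    Mf G w S (Finset.univ \ {a, d}) * Mf G w S (Finset.univ \ {b, c}) +
      Mf G w S (Finset.univ \ {a, b}) * Mf G w S (Finset.univ \ {c, d}) :=
  free_boundary_kuo_four_term_general G w L S a b c d hface hdisj hsepAC hsepBD
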